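/- arXiv:2311.03203 — 3 statements merged into one kernel-verified Lean document; each statement's English description precedes it below -/
import Mathlib

section
/- (Stone–von Neumann over a finite field.) Let k be a finite field of odd characteristic and let W be a finite-dimensional k-vector space with a nondegenerate alternating bilinear form ⟨·,·⟩, and let H(W) be the associated Heisenberg group. For every nontrivial group homomorphism ψ : (k,+) → ℂˣ there exists, up to isomorphism, exactly one irreducible complex representation ρ of H(W) such that ρ(0,t) = ψ(t)·id for all t ∈ k. -/
variable {k W : Type*} [Field k] [AddCommGroup W] [Module k W]

/-- The Heisenberg group structure on `W × k` attached to an alternating bilinear form `B`: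
`(w₁,t₁)·(w₂,t₂) = (w₁+w₂, t₁+t₂+(1/2)⟨w₁,w₂⟩)`. -/
def heisGroup (B : LinearMap.BilinForm k W) (halt : ∀ w : W, B w w = 0) :
    Group (W × k) where
  mul p q := (p.1 + q.1, p.2 + q.2 + (1 / 2 : k) * B p.1 q.1)
  one := (0, 0)
  inv p := (-p.1, -p.2)
  mul_assoc a b c := by
    refine Prod.ext (add_assoc _ _ _) ?_
    show a.2 + b.2 + (1 / 2 : k) * B a.1 b.1 + c.2 + (1 / 2 : k) * B (a.1 + b.1) c.1
        = a.2 + (b.2 + c.2 + (1 / 2 : k) * B b.1 c.1) + (1 / 2 : k) * B a.1 (b.1 + c.1)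
    rw [map_add, LinearMap.add_apply, map_add]
    ring
  one_mul a := by
    refine Prod.ext (zero_add _) ?_
    show (0 : k) + a.2 + (1 / 2 : k) * B 0 a.1 = a.2
    simp
  mul_one a := by
    refine Prod.ext (add_zero _) ?_
    show a.2 + 0 + (1 / 2 : k) * B a.1 0 = a.2
    simp
  inv_mul_cancel a := by
    refine Prod.ext (neg_add_cancel _) ?_
    show -a.2 + a.2 + (1 / 2 : k) * B (-a.1) a.1 = 0
    simp [halt]
/-- An irreducible complex representation of a group `G` (on a space in `Type 0`). -/
structure IrrRep (G : Type*) [Group G] where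
  /-- the underlying space -/
  V : Type
  [instAddCommGroup : AddCommGroup V]
  [instModule : Module ℂ V]
  /-- the group action -/
  ρ : Representation ℂ G V
  nontrivial : Nontrivial V
  irreducible : ∀ U : Submodule ℂ V, (∀ g : G, ∀ v ∈ U, ρ g v ∈ U) → U = ⊥ ∨ U = ⊤

attribute [instance] IrrRep.instAddCommGroup IrrRep.instModule

/-- Isomorphism (equivalence) of representations: a `ℂ`-linear equivalence intertwining
the two actions. -/
def IrrRep.Equiv {G : Type*} [Group G] (r₁ r₂ : IrrRep G) : Prop :=
  ∃ e : r₁.V ≃ₗ[ℂ] r₂.V, ∀ (g : G) (v : r₁.V), e (r₁.ρ g v) = r₂.ρ g (e v)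

section SvnAux

lemma IrrRep.finiteDimensional {G : Type*} [Group G] [Finite G] (r : IrrRep G) :
    FiniteDimensional ℂ r.V := by
  haveI := r.nontrivial
  obtain ⟨v, hv⟩ := exists_ne (0 : r.V)
  haveI := Fintype.ofFinite G
  set U : Submodule ℂ r.V := Submodule.span ℂ (Set.range fun g : G => r.ρ g v) with hUdef
  have hinv : ∀ g : G, ∀ x ∈ U, r.ρ g x ∈ U := by
    intro g x hx
    induction hx using Submodule.span_induction with
    | mem x hx =>
      obtain ⟨h, rfl⟩ := hx
      exact Submodule.subset_span ⟨g * h, by simp [map_mul]⟩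
    | zero => simp
    | add x y _ _ hx hy => rw [map_add]; exact U.add_mem hx hy
    | smul c x _ hx => rw [map_smul]; exact U.smul_mem c hx
  have hUtop : U = ⊤ := by
    rcases r.irreducible U hinv with h | h
    · exfalso
      have hvU : v ∈ U := Submodule.subset_span ⟨1, by simp⟩
      rw [h, Submodule.mem_bot] at hvU
      exact hv hvU
    · exact h
  have hfin : FiniteDimensional ℂ U := FiniteDimensional.span_of_finite ℂ (Set.finite_range _)
  rw [hUtop] at hfin
  exact Module.Finite.equiv (Submodule.topEquiv)

/-- Every finite-dimensional nonzero complex representation of a finite group contains an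
irreducible subrepresentation. -/
lemma exists_irr_subrep {G : Type*} [Group G] [Finite G] (V : Type) [AddCommGroup V]
    [Module ℂ V] [FiniteDimensional ℂ V] [Nontrivial V] (ρ : Representation ℂ G V) :
    ∃ (r : IrrRep G) (f : r.V →ₗ[ℂ] V), Function.Injective f ∧
      ∀ (g : G) (x : r.V), f (r.ρ g x) = ρ g (f x) := by
  classical
  let S : Set (Submodule ℂ V) := {U | U ≠ ⊥ ∧ ∀ g : G, ∀ x ∈ U, ρ g x ∈ U}
  have hStop : (⊤ : Submodule ℂ V) ∈ S := by
    refine ⟨?_, fun g x _ => trivial⟩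
    obtain ⟨v, hv⟩ := exists_ne (0 : V)
    intro h
    have hvmem : v ∈ (⊤ : Submodule ℂ V) := trivial
    rw [h, Submodule.mem_bot] at hvmem
    exact hv hvmem
  have hne : {n | ∃ U ∈ S, Module.finrank ℂ U = n}.Nonempty := ⟨_, ⊤, hStop, rfl⟩
  obtain ⟨U, hUS, hUrank⟩ := Nat.sInf_mem hne
  have hmin : ∀ U' ∈ S, Module.finrank ℂ U ≤ Module.finrank ℂ U' := by
    intro U' hU'
    rw [hUrank]
    exact Nat.sInf_le ⟨U', hU', rfl⟩
  have hminimal : ∀ U' : Submodule ℂ V, U' ≠ ⊥ → (∀ g : G, ∀ x ∈ U', ρ g x ∈ U') →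
      U' ≤ U → U' = U := by
    intro U' h1 h2 hle
    exact Submodule.eq_of_le_of_finrank_le hle (hmin U' ⟨h1, h2⟩)
  have hUinv := hUS.2
  let ρU : Representation ℂ G U :=
  { toFun := fun g => (ρ g).restrict (fun x hx => hUinv g x hx)
    map_one' := by
      refine LinearMap.ext fun x => Subtype.ext ?_
      simp [LinearMap.restrict_coe_apply]
    map_mul' := fun g h => by
      refine LinearMap.ext fun x => Subtype.ext ?_
      simp [LinearMap.restrict_coe_apply, Module.End.mul_apply, map_mul] }
  have hρU : ∀ (g : G) (x : U), (ρU g x : V) = ρ g (x : V) := fun g x => rfl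
  haveI hnontriv : Nontrivial U := Submodule.nontrivial_iff_ne_bot.mpr hUS.1
  refine ⟨{ V := U, ρ := ρU, nontrivial := hnontriv, irreducible := ?_ }, U.subtype,
    U.injective_subtype, fun g x => rfl⟩
  intro U' hU'
  set D : Submodule ℂ V := U'.map U.subtype with hD
  have hDle : D ≤ U := Submodule.map_subtype_le U U'
  have hDinv : ∀ g : G, ∀ x ∈ D, ρ g x ∈ D := by
    rintro g x ⟨u', hu', rfl⟩
    exact ⟨ρU g u', hU' g u' hu', rfl⟩
  by_cases hbot : D = ⊥
  · left
    exact Submodule.map_injective_of_injective U.injective_subtype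
      (by rw [← hD, hbot, Submodule.map_bot])
  · right
    have hDU : D = U := hminimal D hbot hDinv hDle
    exact Submodule.map_injective_of_injective U.injective_subtype
      (by rw [← hD, hDU, Submodule.map_subtype_top])

end SvnAux

/-- Stone–von Neumann over a finite field: for every nontrivial
additive character `ψ : (k,+) → ℂˣ` there is, up to isomorphism, exactly one
irreducible complex representation of the Heisenberg group with central character
`ψ`, i.e. satisfying `ρ(0,t) = ψ(t)·id`. -/
theorem stone_von_neumann [Fintype k] (hchar : ringChar k ≠ 2)
    [FiniteDimensional k W]
    (B : LinearMap.BilinForm k W) (halt : ∀ w : W, B w w = 0)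
    (hnd : ∀ w : W, (∀ v : W, B v w = 0) → w = 0)
    (ψ : AddChar k ℂˣ) (hψ : ∃ t : k, ψ t ≠ 1) :
    letI : Group (W × k) := heisGroup B halt
    (∃ r : IrrRep (W × k),
        ∀ t : k, r.ρ ((0 : W), t) = ((ψ t : ℂˣ) : ℂ) • (LinearMap.id : r.V →ₗ[ℂ] r.V)) ∧
    (∀ r₁ r₂ : IrrRep (W × k),
        (∀ t : k, r₁.ρ ((0 : W), t) = ((ψ t : ℂˣ) : ℂ) • (LinearMap.id : r₁.V →ₗ[ℂ] r₁.V)) →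
        (∀ t : k, r₂.ρ ((0 : W), t) = ((ψ t : ℂˣ) : ℂ) • (LinearMap.id : r₂.V →ₗ[ℂ] r₂.V)) →
        IrrRep.Equiv r₁ r₂) := by
  letI instG : Group (W × k) := heisGroup B halt
  -- basic computation rules for the group law
  have hmul : ∀ a b : W × k, a * b = (a.1 + b.1, a.2 + b.2 + (1 / 2 : k) * B a.1 b.1) :=
    fun _ _ => rfl
  have hinv : ∀ a : W × k, a⁻¹ = (-a.1, -a.2) := fun _ => rfl
  have h2 : (2 : k) ≠ 0 := by
    intro h
    have h2' : ((2 : ℕ) : k) = 0 := by exact_mod_cast h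
    have hdvd : ringChar k ∣ 2 := (ringChar.spec k 2).mp h2'
    rcases (Nat.prime_two.eq_one_or_self_of_dvd _ hdvd) with h1 | h1
    · have : ((1 : ℕ) : k) = 0 := (ringChar.spec k 1).mpr (h1 ▸ dvd_refl _)
      simp at this
    · exact hchar h1
  have hskew : ∀ a b : W, B b a = -B a b := by
    intro a b
    have h0 := halt (a + b)
    simp only [map_add, LinearMap.add_apply, halt] at h0
    linear_combination h0
  haveI : Finite W := Module.finite_of_finite k
  haveI : Fintype W := Fintype.ofFinite W
  constructor
  · -- EXISTENCE
    set n := Fintype.card W with hn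
    let e : W ≃ Fin n := Fintype.equivFin W
    haveI : Nonempty (Fin n) := ⟨⟨0, Fintype.card_pos⟩⟩
    haveI : Nontrivial (Fin n → ℂ) := inferInstance
    let act : (W × k) → (Fin n → ℂ) →ₗ[ℂ] (Fin n → ℂ) := fun g =>
      { toFun := fun f i =>
          ((ψ (g.2 + (1 / 2 : k) * B (e.symm i) g.1) : ℂˣ) : ℂ) * f (e (e.symm i + g.1))
        map_add' := fun f₁ f₂ => by funext i; simp [mul_add]
        map_smul' := fun c f => by funext i; simp [smul_eq_mul]; ring }
    have hact : ∀ g f i, act g f i =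
        ((ψ (g.2 + (1 / 2 : k) * B (e.symm i) g.1) : ℂˣ) : ℂ) * f (e (e.symm i + g.1)) :=
      fun _ _ _ => rfl
    let π : Representation ℂ (W × k) (Fin n → ℂ) :=
    { toFun := act
      map_one' := by
        refine LinearMap.ext fun f => funext fun i => ?_
        rw [hact]
        show ((ψ ((0 : k) + (1 / 2 : k) * B (e.symm i) 0) : ℂˣ) : ℂ) * f (e (e.symm i + 0)) =
          f i
        simp
      map_mul' := fun g₁ g₂ => by
        refine LinearMap.ext fun f => funext fun i => ?_
        have hm1 : (g₁ * g₂).1 = g₁.1 + g₂.1 := rfl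
        have hm2 : (g₁ * g₂).2 = g₁.2 + g₂.2 + (1 / 2 : k) * B g₁.1 g₂.1 := rfl
        rw [Module.End.mul_apply, hact, hact, hact, Equiv.symm_apply_apply, hm1, hm2]
        rw [← mul_assoc, ← Units.val_mul, ← AddChar.map_add_eq_mul]
        congr 2
        · simp only [map_add, LinearMap.add_apply]
          ring
        · rw [add_assoc] }
    obtain ⟨r, f, hfinj, hfequi⟩ := exists_irr_subrep (G := W × k) (Fin n → ℂ) π
    refine ⟨r, fun t => ?_⟩
    refine LinearMap.ext fun x => hfinj ?_
    rw [hfequi]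
    have hcent : π ((0 : W), t) (f x) = ((ψ t : ℂˣ) : ℂ) • (f x) := by
      funext i
      show act ((0 : W), t) (f x) i = _
      rw [hact]
      simp
    rw [hcent]
    have : (((ψ t : ℂˣ) : ℂ) • (LinearMap.id : r.V →ₗ[ℂ] r.V)) x = ((ψ t : ℂˣ) : ℂ) • x := rfl
    rw [this, map_smul]
  · -- UNIQUENESS
    intro r₁ r₂ hc₁ hc₂
    haveI := r₁.nontrivial
    haveI := r₂.nontrivial
    haveI : FiniteDimensional ℂ r₁.V := IrrRep.finiteDimensional r₁
    haveI : FiniteDimensional ℂ r₂.V := IrrRep.finiteDimensional r₂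
    -- traces vanish off the center
    have trZ : ∀ (r : IrrRep (W × k)),
        (∀ t : k, r.ρ ((0 : W), t) = ((ψ t : ℂˣ) : ℂ) • (LinearMap.id : r.V →ₗ[ℂ] r.V)) →
        FiniteDimensional ℂ r.V →
        ∀ w : W, w ≠ 0 → ∀ t : k, LinearMap.trace ℂ r.V (r.ρ (w, t)) = 0 := by
      intro r hc _ w hw t
      obtain ⟨t₀, ht₀⟩ := hψ
      have hex : ¬ (∀ v : W, B v w = 0) := fun h => hw (hnd w h)
      push_neg at hex
      obtain ⟨v₀, hv₀⟩ := hex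
      set v : W := (t₀ * (B v₀ w)⁻¹) • v₀ with hv
      have hBvw : B v w = t₀ := by
        rw [hv, map_smul, LinearMap.smul_apply, smul_eq_mul]
        field_simp
      have hconj : ((v, (0 : k)) * ((w, t) : W × k)) * (v, (0 : k))⁻¹ = (w, t + B v w) := by
        rw [hinv, hmul, hmul]
        refine Prod.ext ?_ ?_
        · show v + w + -v = w
          abel
        · show (0 : k) + t + (1 / 2) * B v w + -0 + (1 / 2) * B (v + w) (-v) = t + B v w
          have hB : B (v + w) (-v) = B v w := by
            rw [map_neg, map_add, LinearMap.add_apply, halt, hskew v w]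
            ring
          rw [hB]
          field_simp
          ring
      have e1 : r.ρ (w, t + B v w) = ((ψ (B v w) : ℂˣ) : ℂ) • r.ρ (w, t) := by
        have hcm : ((0 : W), B v w) * ((w, t) : W × k) = (w, t + B v w) := by
          rw [hmul]
          refine Prod.ext (by simp) ?_
          show B v w + t + (1 / 2) * B 0 w = t + B v w
          simp [add_comm]
        rw [← hcm, map_mul, hc (B v w)]
        refine LinearMap.ext fun x => ?_
        simp [Module.End.mul_apply]
      have e2 : LinearMap.trace ℂ r.V (r.ρ (w, t + B v w)) =
          LinearMap.trace ℂ r.V (r.ρ (w, t)) := by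
        rw [← hconj, map_mul r.ρ, map_mul r.ρ, LinearMap.trace_mul_comm,
          ← map_mul r.ρ, ← map_mul r.ρ, inv_mul_cancel_left]
      have e3 : LinearMap.trace ℂ r.V (r.ρ (w, t)) =
          ((ψ (B v w) : ℂˣ) : ℂ) * LinearMap.trace ℂ r.V (r.ρ (w, t)) := by
        conv_lhs => rw [← e2, e1]
        rw [map_smul, smul_eq_mul]
      by_contra htr
      have hone : (1 : ℂ) = ((ψ (B v w) : ℂˣ) : ℂ) :=
        mul_right_cancel₀ htr (by rw [one_mul]; exact e3)
      apply ht₀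
      rw [hBvw] at hone
      exact Units.ext hone.symm
    -- existence of a nonzero intertwiner
    have key : ∃ A : r₁.V →ₗ[ℂ] r₂.V,
        (∑ h : W × k, r₂.ρ h ∘ₗ A ∘ₗ r₁.ρ h⁻¹) ≠ 0 := by
      by_contra hA
      push_neg at hA
      classical
      let b₁ := Module.finBasis ℂ r₁.V
      let b₂ := Module.finBasis ℂ r₂.V
      have expand : ∀ h : W × k,
          (LinearMap.trace ℂ r₂.V (r₂.ρ h)) * (LinearMap.trace ℂ r₁.V (r₁.ρ h⁻¹)) =
          ∑ i, ∑ j, b₂.repr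
            ((r₂.ρ h ∘ₗ ((b₁.coord j).smulRight (b₂ i)) ∘ₗ r₁.ρ h⁻¹) (b₁ j)) i := by
        intro h
        rw [LinearMap.trace_eq_matrix_trace ℂ b₂, LinearMap.trace_eq_matrix_trace ℂ b₁,
          Matrix.trace, Matrix.trace, Finset.sum_mul_sum]
        refine Finset.sum_congr rfl fun i _ => Finset.sum_congr rfl fun j _ => ?_
        simp only [Matrix.diag_apply, LinearMap.toMatrix_apply, LinearMap.comp_apply,
          LinearMap.smulRight_apply, Module.Basis.coord_apply, map_smul, Finsupp.smul_apply,
          smul_eq_mul]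
        ring
      have hzero : ∑ h : W × k,
          (LinearMap.trace ℂ r₂.V (r₂.ρ h)) * (LinearMap.trace ℂ r₁.V (r₁.ρ h⁻¹)) = 0 := by
        rw [Finset.sum_congr rfl fun h _ => expand h]
        rw [Finset.sum_comm]
        refine Finset.sum_eq_zero fun i _ => ?_
        rw [Finset.sum_comm]
        refine Finset.sum_eq_zero fun j _ => ?_
        have : ∑ h : W × k, b₂.repr
            ((r₂.ρ h ∘ₗ ((b₁.coord j).smulRight (b₂ i)) ∘ₗ r₁.ρ h⁻¹) (b₁ j)) i =
            b₂.repr ((∑ h : W × k,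
              r₂.ρ h ∘ₗ ((b₁.coord j).smulRight (b₂ i)) ∘ₗ r₁.ρ h⁻¹) (b₁ j)) i := by
          rw [LinearMap.sum_apply, map_sum, Finsupp.finset_sum_apply]
        rw [this, hA ((b₁.coord j).smulRight (b₂ i))]
        simp
      have heval : ∑ h : W × k,
          (LinearMap.trace ℂ r₂.V (r₂.ρ h)) * (LinearMap.trace ℂ r₁.V (r₁.ρ h⁻¹)) =
          (Fintype.card k : ℂ) * (Module.finrank ℂ r₂.V : ℂ) * (Module.finrank ℂ r₁.V : ℂ) := by
        rw [Fintype.sum_prod_type]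
        rw [Finset.sum_eq_single (0 : W)]
        · have hterm : ∀ t : k,
              (LinearMap.trace ℂ r₂.V (r₂.ρ ((0 : W), t))) *
              (LinearMap.trace ℂ r₁.V (r₁.ρ (((0 : W), t) : W × k)⁻¹)) =
              (Module.finrank ℂ r₂.V : ℂ) * (Module.finrank ℂ r₁.V : ℂ) := by
            intro t
            have hi : (((0 : W), t) : W × k)⁻¹ = ((0 : W), -t) := by
              rw [hinv]
              exact Prod.ext (by simp) rfl
            rw [hi, hc₁ (-t), hc₂ t, map_smul, map_smul, LinearMap.trace_id,
              LinearMap.trace_id, smul_eq_mul, smul_eq_mul]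
            have hpsi : ((ψ t : ℂˣ) : ℂ) * ((ψ (-t) : ℂˣ) : ℂ) = 1 := by
              rw [← Units.val_mul, ← AddChar.map_add_eq_mul]
              simp
            calc ((ψ t : ℂˣ) : ℂ) * (Module.finrank ℂ r₂.V : ℂ) *
                  (((ψ (-t) : ℂˣ) : ℂ) * (Module.finrank ℂ r₁.V : ℂ))
                = (((ψ t : ℂˣ) : ℂ) * ((ψ (-t) : ℂˣ) : ℂ)) *
                  ((Module.finrank ℂ r₂.V : ℂ) * (Module.finrank ℂ r₁.V : ℂ)) := by ring
              _ = (Module.finrank ℂ r₂.V : ℂ) * (Module.finrank ℂ r₁.V : ℂ) := by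
                  rw [hpsi, one_mul]
          rw [Finset.sum_congr rfl fun t _ => hterm t]
          rw [Finset.sum_const, Finset.card_univ, nsmul_eq_mul]
          ring
        · intro w _ hw
          refine Finset.sum_eq_zero fun t _ => ?_
          rw [trZ r₂ hc₂ inferInstance w hw t, zero_mul]
        · intro habs
          exact absurd (Finset.mem_univ _) habs
      rw [hzero] at heval
      have hck : (Fintype.card k : ℂ) ≠ 0 := Nat.cast_ne_zero.mpr Fintype.card_ne_zero
      have hd2 : (Module.finrank ℂ r₂.V : ℂ) ≠ 0 :=
        Nat.cast_ne_zero.mpr Module.finrank_pos.ne'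
      have hd1 : (Module.finrank ℂ r₁.V : ℂ) ≠ 0 :=
        Nat.cast_ne_zero.mpr Module.finrank_pos.ne'
      exact (mul_ne_zero (mul_ne_zero hck hd2) hd1) heval.symm
    obtain ⟨A, hT⟩ := key
    set T := ∑ h : W × k, r₂.ρ h ∘ₗ A ∘ₗ r₁.ρ h⁻¹ with hTdef
    have hint : ∀ (g : W × k) (x : r₁.V), T (r₁.ρ g x) = r₂.ρ g (T x) := by
      intro g x
      rw [hTdef, LinearMap.sum_apply, LinearMap.sum_apply, map_sum]
      simp only [LinearMap.comp_apply]
      refine (Fintype.sum_equiv (Equiv.mulLeft g)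
        (fun h => r₂.ρ (g * h) (A (r₁.ρ h⁻¹ x)))
        (fun h => r₂.ρ h (A (r₁.ρ h⁻¹ (r₁.ρ g x)))) (fun h => ?_)).symm.trans ?_
      · show r₂.ρ (g * h) (A (r₁.ρ h⁻¹ x)) = r₂.ρ (g * h) (A (r₁.ρ (g * h)⁻¹ (r₁.ρ g x)))
        congr 2
        rw [← Module.End.mul_apply, ← map_mul, mul_inv_rev, mul_assoc, inv_mul_cancel, mul_one]
      · refine Finset.sum_congr rfl fun h _ => ?_
        rw [map_mul]
        rfl
    have hker : LinearMap.ker T = ⊥ := by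
      rcases r₁.irreducible (LinearMap.ker T) (fun g x hx => by
        rw [LinearMap.mem_ker] at hx ⊢
        rw [hint g x, hx, map_zero]) with h | h
      · exact h
      · exact absurd (LinearMap.ker_eq_top.mp h) hT
    have hrange : LinearMap.range T = ⊤ := by
      rcases r₂.irreducible (LinearMap.range T) (fun g y hy => by
        obtain ⟨x, rfl⟩ := hy
        exact ⟨r₁.ρ g x, (hint g x)⟩) with h | h
      · exact absurd (LinearMap.range_eq_bot.mp h) hT
      · exact h
    exact ⟨LinearEquiv.ofBijective T
      ⟨LinearMap.ker_eq_bot.mp hker, LinearMap.range_eq_top.mp hrange⟩,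
      fun g v => hint g v⟩
end

section
/- Let k be a finite field with q elements of odd characteristic, let W be a 2N-dimensional k-vector space with a nondegenerate alternating bilinear form, and let H(W) be the associated Heisenberg group. Every finite-dimensional irreducible complex representation ρ of H(W) whose central character is nontrivial (i.e. ρ(0,t) = ψ(t)·id for a nontrivial homomorphism ψ : (k,+) → ℂˣ) has dimension q^N. -/
variable {k W : Type*} [Field k] [AddCommGroup W] [Module k W]

/-!
Conjugating `(w, t)` by `(v, 0)` multiplies it by the central element `(0, B v w)`, and by
nondegeneracy `B v w` can be any `t₀` with `ψ t₀ ≠ 1`; hence the character of `ρ` vanishes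
off the centre `{0} × k`, on which `ρ` acts by scalars. The orthogonality relation
`∑ g, χ g * χ g⁻¹ = |H(W)|` for the irreducible `ρ` then reads `q * (dim V)² = q ^ (2N + 1)`.
-/

open Finset Module

namespace Representation

variable {G F V : Type*} [Group G] [Field F] [AddCommGroup V] [Module F V]
  (ρ : Representation F G V)

theorem isIrreducible_of_forall_invariant [Nontrivial V]
    (h : ∀ U : Submodule F V, (∀ g, ∀ v ∈ U, ρ g v ∈ U) → U = ⊥ ∨ U = ⊤) :
    IsIrreducible ρ where
  exists_pair_ne := ⟨⊥, ⊤, fun h' => bot_ne_top (congrArg Subrepresentation.toSubmodule h')⟩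
  eq_bot_or_eq_top U := (h U.toSubmodule fun g _ hv => U.apply_mem_toSubmodule g hv).imp
    (fun hU => Subrepresentation.toSubmodule_injective hU)
    (fun hU => Subrepresentation.toSubmodule_injective hU)

theorem character_mul_of_eq_smul_id {z : G} {c : F} (hz : ρ z = c • LinearMap.id) (g : G) :
    ρ.character (z * g) = c * ρ.character g := by
  rw [character, map_mul, hz, smul_mul_assoc, ← Module.End.one_eq_id, one_mul, map_smul,
    smul_eq_mul, character]

theorem character_eq_zero_of_conj_eq_mul {g x z : G} {c : F}
    (hconj : x * g * x⁻¹ = z * g) (hz : ρ z = c • LinearMap.id) (hc : c ≠ 1) :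
    ρ.character g = 0 := by
  have hscale : ρ.character g = c * ρ.character g := by
    rw [← character_mul_of_eq_smul_id ρ hz, ← hconj, char_conj]
  have : (1 - c) * ρ.character g = 0 := by linear_combination hscale
  exact (mul_eq_zero.mp this).resolve_left (sub_ne_zero.mpr hc.symm)

theorem character_mul_character_inv_of_eq_smul_id [FiniteDimensional F V] {z : G} {c : F}
    (hz : ρ z = c • LinearMap.id) :
    ρ.character z * ρ.character z⁻¹ = finrank F V ^ 2 := by
  calc ρ.character z * ρ.character z⁻¹ = c * ρ.character 1 * ρ.character z⁻¹ := by
        rw [← character_mul_of_eq_smul_id ρ hz, mul_one]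
    _ = ρ.character 1 * (c * ρ.character z⁻¹) := by ring
    _ = finrank F V ^ 2 := by
        rw [← character_mul_of_eq_smul_id ρ hz, mul_inv_cancel, char_one, sq]

theorem card_mul_finrank_sq_eq_card [FiniteDimensional F V] [Fintype G]
    [Invertible (Nat.card G : F)] [IsAlgClosed F] [IsIrreducible ρ] (Z : Finset G)
    (hvan : ∀ g ∉ Z, ρ.character g = 0) (hscalar : ∀ z ∈ Z, ∃ c : F, ρ z = c • LinearMap.id) :
    (#Z * finrank F V ^ 2 : F) = Nat.card G := by
  have hsum : ∑ g, ρ.character g * ρ.character g⁻¹ = #Z * finrank F V ^ 2 := by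
    rw [← Finset.sum_subset (Finset.subset_univ Z) fun g _ hg => by rw [hvan g hg, zero_mul],
      ← nsmul_eq_mul, ← Finset.sum_const]
    refine Finset.sum_congr rfl fun z hz => ?_
    obtain ⟨c, hc⟩ := hscalar z hz
    exact character_mul_character_inv_of_eq_smul_id ρ hc
  have horth := char_orthonormal ρ ρ
  rw [if_pos ⟨Equiv.refl ρ⟩, hsum] at horth
  exact ((inv_mul_eq_one₀ (Invertible.ne_zero _)).mp horth).symm

end Representation

section Heisenberg

variable (B : LinearMap.BilinForm k W) (halt : ∀ w : W, B w w = 0)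

theorem heisGroup_conj (h2 : (2 : k) ≠ 0) (v w : W) (t : k) :
    letI := heisGroup B halt
    ((v, 0) : W × k) * (w, t) * (v, 0)⁻¹ = ((0, B v w) : W × k) * (w, t) := by
  refine Prod.ext (show v + w + -v = 0 + w by abel) ?_
  show 0 + t + 1 / 2 * B v w + -0 + 1 / 2 * B (v + w) (-v) = B v w + t + 1 / 2 * B 0 w
  rw [map_add, LinearMap.add_apply, map_neg, map_neg, map_zero, LinearMap.zero_apply, halt,
    ← LinearMap.IsAlt.neg halt v w]
  field_simp
  ring

theorem heisGroup_character_eq_zero {F V : Type*} [Field F] [AddCommGroup V] [Module F V]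
    (h2 : (2 : k) ≠ 0) (hnd : ∀ w : W, (∀ v : W, B v w = 0) → w = 0) :
    letI := heisGroup B halt
    ∀ (ρ : Representation F (W × k) V) (ψ : AddChar k Fˣ), (∃ t, ψ t ≠ 1) →
      (∀ t : k, ρ ((0 : W), t) = ((ψ t : Fˣ) : F) • LinearMap.id) →
      ∀ g : W × k, g.1 ≠ 0 → ρ.character g = 0 := by
  let := heisGroup B halt
  intro ρ ψ ⟨t₀, ht₀⟩ hcen ⟨w, t⟩ hw
  have hBw : B.flip w ≠ 0 := fun h => hw (hnd w fun v => LinearMap.congr_fun h v)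
  obtain ⟨v, hv⟩ := LinearMap.surjective_of_ne_zero hBw t₀
  refine ρ.character_eq_zero_of_conj_eq_mul (heisGroup_conj B halt h2 v w t) (hcen _) ?_
  rw [← hv] at ht₀
  exact fun h => ht₀ (Units.ext h)

end Heisenberg

/-- every finite-dimensional irreducible complex representation of the
Heisenberg group with nontrivial central character `ψ` has dimension `q^N`. -/
theorem heisenberg_irreducible_dim (q N : ℕ) [Fintype k]
    (hq : Fintype.card k = q) (hchar : ringChar k ≠ 2)
    [FiniteDimensional k W] (hdim : Module.finrank k W = 2 * N)
    (B : LinearMap.BilinForm k W) (halt : ∀ w : W, B w w = 0)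
    (hnd : ∀ w : W, (∀ v : W, B v w = 0) → w = 0)
    (V : Type*) [AddCommGroup V] [Module ℂ V] [FiniteDimensional ℂ V] :
    letI : Group (W × k) := heisGroup B halt
    ∀ (ρ : Representation ℂ (W × k) V) (ψ : AddChar k ℂˣ),
      Nontrivial V →
      (∀ U : Submodule ℂ V, (∀ g : W × k, ∀ v ∈ U, ρ g v ∈ U) → U = ⊥ ∨ U = ⊤) →
      (∃ t : k, ψ t ≠ 1) →
      (∀ t : k, ρ ((0 : W), t) = ((ψ t : ℂˣ) : ℂ) • (LinearMap.id : V →ₗ[ℂ] V)) →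
      Module.finrank ℂ V = q ^ N := by
  let := heisGroup B halt
  intro ρ ψ _ hirr hψ hcen
  have := ρ.isIrreducible_of_forall_invariant hirr
  have : Fintype W := @Fintype.ofFinite W (Module.finite_of_finite k)
  have : Invertible (Nat.card (W × k) : ℂ) := invertibleOfNonzero (by simp)
  have hcard := ρ.card_mul_finrank_sq_eq_card ({0} ×ˢ univ)
    (fun g hg => heisGroup_character_eq_zero B halt (Ring.two_ne_zero hchar) hnd ρ ψ hψ hcen g
      (by simpa only [mem_product, mem_singleton, mem_univ, and_true] using hg))
    (by
      rintro ⟨w, t⟩ hz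
      obtain rfl : w = 0 := by simpa only [mem_product, mem_singleton, mem_univ, and_true] using hz
      exact ⟨_, hcen t⟩)
  rw [card_product, card_singleton, card_univ, hq, Nat.card_prod, Nat.card_eq_fintype_card,
    Nat.card_eq_fintype_card, Module.card_eq_pow_finrank (K := k), hq, hdim] at hcard
  have hq0 : q ≠ 0 := hq ▸ Fintype.card_ne_zero
  refine Nat.pow_left_injective two_ne_zero (Nat.eq_of_mul_eq_mul_left (Nat.pos_of_ne_zero hq0) ?_)
  have hcardC : ((q * finrank ℂ V ^ 2 : ℕ) : ℂ) = (q * (q ^ N) ^ 2 : ℕ) := by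
    push_cast at hcard ⊢
    linear_combination hcard
  exact_mod_cast hcardC
end

section
/- (Existence and uniqueness of the maximal representation.) Let N ≥ N' ≥ 0 be integers and let ξ', η' be partitions with |ξ'| + |η'| = N', with N ≥ |ξ'|. Let Θ be the set of partitions η with |ξ'| + |η| = N for which there exists a partition ζ with ζ ≼ η and ζ ≼ η'. Define η_max := (N − N' + η'₁ + η'₂, η'₃, η'₄, …). Then η_max is a partition, η_max ∈ Θ, and every η ∈ Θ satisfies η ⊴ η_max in the dominance order; in particular η_max is the unique maximal element of Θ. -/
/-- A partition: a weakly decreasing sequence of nonnegative integers with finitely many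
nonzero terms.  `parts i` is the `(i+1)`-st part (so indices are 0-based). -/
structure Partn where
  /-- the parts, 0-indexed -/
  parts : ℕ → ℕ
  antitone : ∀ ⦃i j : ℕ⦄, i ≤ j → parts j ≤ parts i
  eventually_zero : ∃ N : ℕ, ∀ i : ℕ, N ≤ i → parts i = 0

/-- `|λ|`, the sum of all parts. -/
noncomputable def Partn.size (p : Partn) : ℕ := ∑ᶠ i, p.parts i

/-- `ζ ≼ η` iff `η_{i+1} ≤ ζ_i ≤ η_i` for all `i ≥ 1` (here with 0-based indices). -/
def Partn.Prec (ζ η : Partn) : Prop :=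
  ∀ i : ℕ, η.parts (i + 1) ≤ ζ.parts i ∧ ζ.parts i ≤ η.parts i

/-- Dominance order `λ ⊴ μ`: all partial sums of `λ` are at most those of `μ`. -/
def Partn.DomLE (l m : Partn) : Prop :=
  ∀ n : ℕ, ∑ i ∈ Finset.range n, l.parts i ≤ ∑ i ∈ Finset.range n, m.parts i

/-- `m = l ∪ (x)`: the partition `m` is obtained from `l` by inserting one extra part
equal to `x` (at some position `j`, all other parts being kept in order). -/
def Partn.IsInsert (l : Partn) (x : ℕ) (m : Partn) : Prop :=
  ∃ j : ℕ, (∀ i : ℕ, i < j → m.parts i = l.parts i) ∧ m.parts j = x ∧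
    ∀ i : ℕ, m.parts (j + 1 + i) = l.parts (j + i)

/-- The set `Θ` of partitions `η` with `|ξ'| + |η| = N` admitting a partition `ζ`
with `ζ ≼ η` and `ζ ≼ η'`. -/
def Theta (xi' eta' : Partn) (N : ℕ) : Set Partn :=
  {eta | xi'.size + eta.size = N ∧ ∃ ζ : Partn, ζ.Prec eta ∧ ζ.Prec eta'}

/-!
If `ζ ≼ η` and `ζ ≼ η'` then `η'ᵢ₊₁ ≤ ζᵢ ≤ ηᵢ`, so the parts of `η` beyond its first `n`
weigh at least the parts of `η'` beyond its first `n + 1`. As `|η| = N - N' + |η'|` is fixed,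
`η₁ + ⋯ + ηₙ ≤ N - N' + η'₁ + ⋯ + η'ₙ₊₁`, which is the `n`-th partial sum of `η_max`; and
`η_max` itself lies in `Θ`, witnessed by `ζ = (η'₂, η'₃, …)`.
-/

open Finset

namespace Partn

lemma size_eq_sum_range (p : Partn) {M : ℕ} (h : ∀ i, M ≤ i → p.parts i = 0) :
    p.size = ∑ i ∈ range M, p.parts i := by
  apply finsum_eq_sum_of_support_subset
  intro i hi
  by_contra hiM
  exact hi (h i (by simpa using hiM))

lemma DomLE.parts_eq {l m : Partn} (hlm : l.DomLE m) (hml : m.DomLE l) : l.parts = m.parts := by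
  funext i
  have hi := le_antisymm (hlm i) (hml i)
  have hsucc := le_antisymm (hlm (i + 1)) (hml (i + 1))
  rw [sum_range_succ, sum_range_succ, hi] at hsucc
  exact Nat.add_left_cancel hsucc

lemma size_add_sum_range_le_of_parts_succ_le {p q : Partn}
    (h : ∀ i, q.parts (i + 1) ≤ p.parts i) (n : ℕ) :
    q.size + ∑ i ∈ range n, p.parts i ≤ p.size + ∑ i ∈ range (n + 1), q.parts i := by
  obtain ⟨Mp, hMp⟩ := p.eventually_zero
  obtain ⟨Mq, hMq⟩ := q.eventually_zero
  set K := Mp + Mq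
  have hp : p.size = ∑ i ∈ range n, p.parts i + ∑ k ∈ range K, p.parts (n + k) := by
    rw [p.size_eq_sum_range (M := n + K) fun i hi => hMp i (by omega), sum_range_add]
  have hq : q.size = ∑ i ∈ range (n + 1), q.parts i + ∑ k ∈ range K, q.parts (n + 1 + k) := by
    rw [q.size_eq_sum_range (M := n + 1 + K) fun i hi => hMq i (by omega), sum_range_add]
  have htail : ∑ k ∈ range K, q.parts (n + 1 + k) ≤ ∑ k ∈ range K, p.parts (n + k) :=
    sum_le_sum fun k _ => by simpa only [Nat.add_right_comm n 1 k] using h (n + k)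
  omega

def tail (q : Partn) : Partn where
  parts i := q.parts (i + 1)
  antitone _ _ hij := q.antitone (Nat.succ_le_succ hij)
  eventually_zero := by
    obtain ⟨M, hM⟩ := q.eventually_zero
    exact ⟨M, fun i hi => hM (i + 1) (by omega)⟩

lemma tail_prec (q : Partn) : q.tail.Prec q :=
  fun i => ⟨le_rfl, q.antitone (Nat.le_succ i)⟩

def mergeTop (q : Partn) (d : ℕ) : Partn where
  parts
    | 0 => d + q.parts 0 + q.parts 1
    | i + 1 => q.parts (i + 2)
  antitone
    | 0, 0, _ => le_rfl
    | 0, j + 1, _ => le_add_left (q.antitone (by omega))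
    | _ + 1, _ + 1, hij => q.antitone (by omega)
  eventually_zero := by
    obtain ⟨M, hM⟩ := q.eventually_zero
    exact ⟨M + 1, fun | i + 1, hi => hM (i + 2) (by omega)⟩

@[simp]
lemma mergeTop_parts_zero (q : Partn) (d : ℕ) :
    (q.mergeTop d).parts 0 = d + q.parts 0 + q.parts 1 := rfl

@[simp]
lemma mergeTop_parts_succ (q : Partn) (d i : ℕ) :
    (q.mergeTop d).parts (i + 1) = q.parts (i + 2) := rfl

lemma sum_range_succ_mergeTop (q : Partn) (d n : ℕ) :
    ∑ i ∈ range (n + 1), (q.mergeTop d).parts i = d + ∑ i ∈ range (n + 2), q.parts i := by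
  rw [sum_range_succ', sum_range_succ' _ (n + 1), sum_range_succ']
  simp only [mergeTop_parts_succ, mergeTop_parts_zero]
  ring

lemma mergeTop_size (q : Partn) (d : ℕ) : (q.mergeTop d).size = d + q.size := by
  obtain ⟨M, hM⟩ := q.eventually_zero
  rw [(q.mergeTop d).size_eq_sum_range (M := M + 1) fun | i + 1, hi => hM (i + 2) (by omega),
    sum_range_succ_mergeTop, q.size_eq_sum_range (M := M + 2) fun i hi => hM i (by omega)]

lemma tail_prec_mergeTop (q : Partn) (d : ℕ) : q.tail.Prec (q.mergeTop d) := by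
  rintro (_ | i)
  · exact ⟨q.antitone (by omega), by simp [tail]⟩
  · exact ⟨q.antitone (by omega), le_rfl⟩

lemma domLE_mergeTop {ζ η q : Partn} {d : ℕ} (hη : ζ.Prec η) (hq : ζ.Prec q)
    (hsize : η.size = d + q.size) : η.DomLE (q.mergeTop d) := by
  rintro (_ | n)
  · simp
  have htail : q.size + ∑ i ∈ range (n + 1), η.parts i ≤ η.size + ∑ i ∈ range (n + 2), q.parts i :=
    size_add_sum_range_le_of_parts_succ_le (fun i => (hq i).1.trans (hη i).2) (n + 1)
  rw [sum_range_succ_mergeTop]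
  omega

end Partn

theorem maximal_representation_general (N N' : ℕ) (hN' : N' ≤ N)
    (xi' eta' : Partn) (hsum : xi'.size + eta'.size = N') :
    ∃ etamax : Partn,
      etamax.parts 0 = N - N' + eta'.parts 0 + eta'.parts 1 ∧
      (∀ i : ℕ, etamax.parts (i + 1) = eta'.parts (i + 2)) ∧
      etamax ∈ Theta xi' eta' N ∧
      (∀ eta ∈ Theta xi' eta' N, eta.DomLE etamax) ∧
      (∀ eta ∈ Theta xi' eta' N, (∀ eta₂ ∈ Theta xi' eta' N, eta₂.DomLE eta) →
        eta.parts = etamax.parts) := by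
  have hsize : xi'.size + (eta'.mergeTop (N - N')).size = N := by
    rw [Partn.mergeTop_size]
    omega
  have hmem : eta'.mergeTop (N - N') ∈ Theta xi' eta' N :=
    ⟨hsize, eta'.tail, eta'.tail_prec_mergeTop _, eta'.tail_prec⟩
  have hdom : ∀ eta ∈ Theta xi' eta' N, eta.DomLE (eta'.mergeTop (N - N')) := by
    rintro eta ⟨heta, ζ, hζη, hζη'⟩
    exact Partn.domLE_mergeTop hζη hζη' (by omega)
  exact ⟨_, rfl, fun _ => rfl, hmem, hdom,
    fun eta heta hmax => (hdom eta heta).parts_eq (hmax _ hmem)⟩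

/-- existence and uniqueness of the maximal representation:
`η_max := (N − N' + η'₁ + η'₂, η'₃, η'₄, …)` is a partition, belongs to `Θ`, and
dominates every element of `Θ`; in particular it is the unique maximal element. -/
theorem maximal_representation (N N' : ℕ) (hN' : N' ≤ N)
    (xi' eta' : Partn) (hsum : xi'.size + eta'.size = N') (hle : xi'.size ≤ N) :
    ∃ etamax : Partn,
      etamax.parts 0 = N - N' + eta'.parts 0 + eta'.parts 1 ∧
      (∀ i : ℕ, etamax.parts (i + 1) = eta'.parts (i + 2)) ∧
      etamax ∈ Theta xi' eta' N ∧
      (∀ eta ∈ Theta xi' eta' N, eta.DomLE etamax) ∧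
      (∀ eta ∈ Theta xi' eta' N, (∀ eta₂ ∈ Theta xi' eta' N, eta₂.DomLE eta) →
        eta.parts = etamax.parts) :=
  maximal_representation_general N N' hN' xi' eta' hsum
end
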